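/- Let k be a field of characteristic p > 0 and n a positive integer not divisible by p. Then for any k-vector space V, the natural map from the degree-n part of the free operadic Lie algebra on V to V^{⊗n} is injective; i.e., (V^{⊗n} ⊗ Lie_n)_{S_n} → V^{⊗n} is injective. -/

import Mathlib

/-!
Over any commutative ring the Dynkin element satisfies `θ_n * θ_n = n • θ_n`
(Dynkin–Specht–Wever). Let `S_n` act on the free algebra on `x₀, …, x_{n-1}` by permuting
letters; then `σ ↦ σ • (x₀ x₁ ⋯ x_{n-1})` embeds `k[S_n]`, and `θ_n` sends `x₀ x₁ ⋯ x_{n-1}` to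
its left-normed bracket. The Dynkin map `x_{i₁} ⋯ x_{iₘ} ↦ [⋯[x_{i₁}, x_{i₂}], …, x_{iₘ}]`
commutes with the action and multiplies every left-normed bracket of length `m` by `m`, so
`θ_n • θ_n • (x₀ ⋯ x_{n-1}) = n • θ_n • (x₀ ⋯ x_{n-1})`.

For the theorem, the coinvariant relations identify `a` with `w ⊗ 1`, where `w` is the image of
`a` under the action map, and `evalLie a = θ_n • w`. If `n` is invertible and this vanishes, then
`w ⊗ 1 = w ⊗ (1 - θ_n / n) + n⁻¹ • (w ⊗ θ_n)`: the first term lies in `V^{⊗n} ⊗ Ann_l(θ_n)`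
because `θ_n / n` is idempotent, and the second is congruent to `(θ_n • w) ⊗ 1 = 0`.
-/

open MonoidAlgebra TensorProduct PiTensorProduct

noncomputable section

noncomputable def cycleDown (n j : ℕ) : Equiv.Perm (Fin n) :=
  if h : j < n then ((⟨j, h⟩ : Fin n).cycleRange)⁻¹ else 1

/-- The Dynkin element `θ_n = (1 - (2 1))(1 - (3 2 1)) ⋯ (1 - (n ... 1))`. -/
noncomputable def dynkin (k : Type) [CommRing k] (n : ℕ) :
    MonoidAlgebra k (Equiv.Perm (Fin n)) :=
  ((List.range (n - 1)).map (fun j =>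
    (1 : MonoidAlgebra k (Equiv.Perm (Fin n))) -
      MonoidAlgebra.of k (Equiv.Perm (Fin n)) (cycleDown n (j + 1)))).prod

variable (k : Type) [Field k] (n : ℕ) (V : Type) [AddCommGroup V] [Module k V]

/-- The `n`-th tensor power `V^{⊗n}`. -/
abbrev Tpow := ⨂[k] (_ : Fin n), V

/-- The left action of `σ ∈ S_n` on `V^{⊗n}`, permuting the tensor factors. -/
def permTpow (σ : Equiv.Perm (Fin n)) : Tpow k n V →ₗ[k] Tpow k n V :=
  (PiTensorProduct.reindex k (fun _ => V) σ).toLinearMap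

/-- The left annihilator of the Dynkin element: `Ann_l(θ_n) = {x | x·θ_n = 0}`;
`Lie_n(k) = k[S_n]/Ann_l(θ_n) ≅ k[S_n]·θ_n`. -/
def annL : Submodule k (MonoidAlgebra k (Equiv.Perm (Fin n))) :=
  LinearMap.ker (LinearMap.mulRight k (dynkin k n))

/-- The relations cutting out `V^{⊗n} ⊗ Lie_n` inside `V^{⊗n} ⊗ k[S_n]`
(under `Lie_n = k[S_n]/Ann_l(θ_n)`). -/
def annPart : Submodule k (Tpow k n V ⊗[k] MonoidAlgebra k (Equiv.Perm (Fin n))) :=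
  LinearMap.range (TensorProduct.map (LinearMap.id) (Submodule.subtype (annL k n)))

/-- The antipode-twisted action of the group algebra `k[S_n]` on `V^{⊗n}`:
`single σ c ↦ c • (action of σ⁻¹)`. -/
def actS : MonoidAlgebra k (Equiv.Perm (Fin n)) →ₗ[k] (Tpow k n V →ₗ[k] Tpow k n V) :=
  (Finsupp.lsum k (fun σ => LinearMap.toSpanSingleton k _ (permTpow k n V σ⁻¹))).comp
    (MonoidAlgebra.coeffLinearEquiv k).toLinearMap

/-- The evaluation map `V^{⊗n} ⊗ k[S_n] → V^{⊗n}`, sending `v ⊗ x` to the result of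
evaluating the Lie monomial `x·θ_n` (viewed via the Dynkin element as an iterated
commutator in the tensor algebra) on `v`. -/
def evalLie : Tpow k n V ⊗[k] MonoidAlgebra k (Equiv.Perm (Fin n)) →ₗ[k] Tpow k n V :=
  TensorProduct.lift
    (((actS k n V).comp (LinearMap.mulRight k (dynkin k n))).flip)

/-- The diagonal action of `σ ∈ S_n` on `V^{⊗n} ⊗ k[S_n]`. -/
def diagActT (σ : Equiv.Perm (Fin n)) :
    Tpow k n V ⊗[k] MonoidAlgebra k (Equiv.Perm (Fin n)) →ₗ[k]
      Tpow k n V ⊗[k] MonoidAlgebra k (Equiv.Perm (Fin n)) :=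
  TensorProduct.map (permTpow k n V σ)
    (LinearMap.mulLeft k (MonoidAlgebra.of k (Equiv.Perm (Fin n)) σ))

/-- The coinvariant relations `span{σ•m - m}`. -/
def coinvRel (G M : Type) [AddCommGroup M] [Module k M]
    (ρ : G → (M →ₗ[k] M)) : Submodule k M :=
  Submodule.span k {x | ∃ (σ : G) (m : M), x = ρ σ m - m}

/-- The total relation submodule: `FOLie_n(V) = (V^{⊗n} ⊗ Lie_n)_{S_n}` is the
quotient of `V^{⊗n} ⊗ k[S_n]` by this submodule. -/
def folieRel : Submodule k (Tpow k n V ⊗[k] MonoidAlgebra k (Equiv.Perm (Fin n))) :=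
  annPart k n V ⊔
    coinvRel k (Equiv.Perm (Fin n)) (Tpow k n V ⊗[k] MonoidAlgebra k (Equiv.Perm (Fin n)))
      (diagActT k n V)

namespace FreeMonoidAlgebra

variable (R : Type*) [CommRing R] {X Y : Type*}

local notation "𝔸" => MonoidAlgebra R (FreeMonoid X)

def gen (x : X) : 𝔸 := of R _ (FreeMonoid.of x)

def leftNormedBracket : List X → 𝔸
  | [] => 0
  | x :: t => t.foldl (fun a y => ⁅a, gen R y⁆) (gen R x)

def dynkinMap : 𝔸 →ₗ[R] 𝔸 :=
  (Finsupp.lsum R fun w => LinearMap.toSpanSingleton R _ (leftNormedBracket R w.toList)) ∘ₗ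
    (coeffLinearEquiv R).toLinearMap

def constantCoeff : 𝔸 →ₐ[R] R := MonoidAlgebra.lift R R (FreeMonoid X) (FreeMonoid.lift 0)

variable {R}

@[simp]
lemma leftNormedBracket_singleton (x : X) : leftNormedBracket R [x] = gen R x := rfl

lemma leftNormedBracket_append_singleton {l : List X} (hl : l ≠ []) (x : X) :
    leftNormedBracket R (l ++ [x]) = ⁅leftNormedBracket R l, gen R x⁆ := by
  obtain ⟨y, t, rfl⟩ := List.exists_cons_of_ne_nil hl
  simp [leftNormedBracket, List.foldl_append]

lemma dynkinMap_single (w : FreeMonoid X) (c : R) :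
    dynkinMap R (single w c) = c • leftNormedBracket R w.toList := by
  simp [dynkinMap]

@[simp]
lemma dynkinMap_gen (x : X) : dynkinMap R (gen R x) = gen R x := by
  simp [gen, dynkinMap_single]

@[simp]
lemma constantCoeff_single_one (c : R) : constantCoeff R (single (1 : FreeMonoid X) c) = c := by
  simp [constantCoeff]

@[simp]
lemma constantCoeff_single_of_mul (y : X) (w : FreeMonoid X) (c : R) :
    constantCoeff R (single (FreeMonoid.of y * w) c) = 0 := by
  simp [constantCoeff]

@[simp]
lemma constantCoeff_gen (x : X) : constantCoeff R (gen R x) = 0 := by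
  simpa [gen] using constantCoeff_single_of_mul (R := R) x 1 1

@[simp]
lemma constantCoeff_lie (a b : 𝔸) : constantCoeff R ⁅a, b⁆ = 0 := by
  rw [Ring.lie_def, map_sub, map_mul, map_mul, mul_comm, sub_self]

@[simp]
lemma constantCoeff_leftNormedBracket (l : List X) :
    constantCoeff R (leftNormedBracket R l) = 0 := by
  induction l using List.reverseRecOn with
  | nil => exact map_zero _
  | append_singleton l x _ =>
    rcases eq_or_ne l [] with rfl | hl
    · exact constantCoeff_gen x
    · rw [leftNormedBracket_append_singleton hl, constantCoeff_lie]

lemma dynkinMap_mul_gen (v : 𝔸) (x : X) :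
    dynkinMap R (v * gen R x) = ⁅dynkinMap R v, gen R x⁆ + constantCoeff R v • gen R x := by
  induction v using MonoidAlgebra.induction_linear with
  | zero => simp [Ring.lie_def]
  | add v w hv hw => simp only [add_mul, map_add, hv, hw, Ring.lie_def, add_smul]; noncomm_ring
  | single w c =>
    induction w using FreeMonoid.casesOn with
    | one => simp [dynkinMap_single, gen, leftNormedBracket, Ring.lie_def]
    | of_mul y w =>
      have hne : (FreeMonoid.of y * w).toList ≠ [] := by simp
      have hword : single (FreeMonoid.of y * w) c * gen R x =
          single (FreeMonoid.of y * w * FreeMonoid.of x) c := by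
        simp [gen, single_mul_single]
      rw [hword, dynkinMap_single, dynkinMap_single, FreeMonoid.toList_mul, FreeMonoid.toList_of,
        leftNormedBracket_append_singleton hne, constantCoeff_single_of_mul, zero_smul, add_zero]
      simp only [Ring.lie_def, smul_sub, smul_mul_assoc, mul_smul_comm]

lemma dynkinMap_mul_leftNormedBracket (l : List X) {v : 𝔸} (hv : constantCoeff R v = 0) :
    dynkinMap R (v * leftNormedBracket R l) = ⁅dynkinMap R v, leftNormedBracket R l⁆ := by
  induction l using List.reverseRecOn generalizing v with
  | nil => simp [leftNormedBracket, Ring.lie_def]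
  | append_singleton l x ih =>
    rcases eq_or_ne l [] with rfl | hl
    · simp [dynkinMap_mul_gen, hv]
    · have hvL : constantCoeff R (v * leftNormedBracket R l) = 0 := by simp [hv]
      have hvg : dynkinMap R (v * gen R x) = ⁅dynkinMap R v, gen R x⁆ := by
        simp [dynkinMap_mul_gen, hv]
      rw [leftNormedBracket_append_singleton hl, Ring.lie_def, mul_sub, ← mul_assoc, ← mul_assoc, map_sub, dynkinMap_mul_gen, hvL,
        ih hv, ih (by simp [hv]), hvg]
      simp only [Ring.lie_def, zero_smul, add_zero]
      noncomm_ring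

theorem dynkinMap_leftNormedBracket (l : List X) :
    dynkinMap R (leftNormedBracket R l) = l.length • leftNormedBracket R l := by
  induction l using List.reverseRecOn with
  | nil => simp [leftNormedBracket]
  | append_singleton l x ih =>
    rcases eq_or_ne l [] with rfl | hl
    · simp
    · rw [leftNormedBracket_append_singleton hl, Ring.lie_def, map_sub, dynkinMap_mul_gen,
        dynkinMap_mul_leftNormedBracket l (constantCoeff_gen x), ih, dynkinMap_gen,
        constantCoeff_leftNormedBracket]
      simp only [Ring.lie_def, zero_smul, add_zero, List.length_append, List.length_singleton,
        smul_sub, succ_nsmul, smul_mul_assoc, mul_smul_comm]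
      abel

variable (R) in
def rename (f : X → Y) : 𝔸 →ₐ[R] MonoidAlgebra R (FreeMonoid Y) :=
  mapDomainAlgHom R R (FreeMonoid.map f)

variable (R) in
def permAction : MonoidAlgebra R (Equiv.Perm X) →ₐ[R] Module.End R 𝔸 :=
  MonoidAlgebra.lift R (Module.End R 𝔸) (Equiv.Perm X)
    { toFun σ := (rename R σ).toLinearMap
      map_one' := by
        rw [Equiv.Perm.coe_one, rename, FreeMonoid.map_id, mapDomainAlgHom_id]; rfl
      map_mul' σ τ := by
        rw [Equiv.Perm.coe_mul, rename, FreeMonoid.map_comp, mapDomainAlgHom_comp]; rfl }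

@[simp]
lemma rename_single (f : X → Y) (w : FreeMonoid X) (c : R) :
    rename R f (single w c) = single (FreeMonoid.map f w) c := by
  simp [rename]

@[simp]
lemma rename_gen (f : X → Y) (x : X) : rename R f (gen R x) = gen R (f x) := by
  simp [gen]

lemma rename_lie (f : X → Y) (a b : 𝔸) : rename R f ⁅a, b⁆ = ⁅rename R f a, rename R f b⁆ := by
  simp only [Ring.lie_def, map_sub, map_mul]

lemma rename_leftNormedBracket (f : X → Y) (l : List X) :
    rename R f (leftNormedBracket R l) = leftNormedBracket R (l.map f) := by
  induction l using List.reverseRecOn with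
  | nil => simp [leftNormedBracket]
  | append_singleton l x ih =>
    rcases eq_or_ne l [] with rfl | hl
    · simp
    · rw [leftNormedBracket_append_singleton hl, List.map_append, List.map_singleton,
        leftNormedBracket_append_singleton (by simpa using hl), rename_lie, ih, rename_gen]

lemma dynkinMap_rename (f : X → Y) (v : 𝔸) :
    dynkinMap R (rename R f v) = rename R f (dynkinMap R v) := by
  induction v using MonoidAlgebra.induction_linear with
  | zero => simp
  | add v w hv hw => simp only [map_add, hv, hw]
  | single w c =>
    rw [rename_single, dynkinMap_single, dynkinMap_single, map_smul, rename_leftNormedBracket,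
      FreeMonoid.toList_map]

lemma permAction_single (σ : Equiv.Perm X) (c : R) (v : 𝔸) :
    permAction R (single σ c) v = c • rename R σ v := by
  simp [permAction]

lemma permAction_of (σ : Equiv.Perm X) (v : 𝔸) : permAction R (of R _ σ) v = rename R σ v := by
  rw [of_apply, permAction_single, one_smul]

lemma permAction_dynkinMap (x : MonoidAlgebra R (Equiv.Perm X)) (v : 𝔸) :
    permAction R x (dynkinMap R v) = dynkinMap R (permAction R x v) := by
  induction x using MonoidAlgebra.induction_linear with
  | zero => simp
  | add x y hx hy => simp only [map_add, LinearMap.add_apply, hx, hy]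
  | single σ c => rw [permAction_single, permAction_single, map_smul, dynkinMap_rename]

lemma permAction_lie_gen {a : X} {x : MonoidAlgebra R (Equiv.Perm X)}
    (hx : x ∈ Algebra.adjoin R (of R _ '' {σ | σ a = a})) (v : 𝔸) :
    permAction R x ⁅v, gen R a⁆ = ⁅permAction R x v, gen R a⁆ := by
  induction hx using Algebra.adjoin_induction generalizing v with
  | mem x hx =>
    obtain ⟨σ, hσ, rfl⟩ := hx
    rw [permAction_of, permAction_of, rename_lie, rename_gen, hσ]
  | algebraMap r =>
    simp [Algebra.algebraMap_eq_smul_one, Ring.lie_def, smul_sub]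
  | add x y _ _ hx hy =>
    rw [map_add, LinearMap.add_apply, LinearMap.add_apply, hx, hy]
    simp only [Ring.lie_def]
    noncomm_ring
  | mul x y _ _ hx hy => rw [map_mul, Module.End.mul_apply, Module.End.mul_apply, hy, hx]

lemma permAction_apply_single_ofList (x : MonoidAlgebra R (Equiv.Perm X)) (l : List X) :
    permAction R x (single (FreeMonoid.ofList l) 1) =
      mapDomain (fun σ : Equiv.Perm X => FreeMonoid.ofList (l.map σ)) x := by
  induction x using MonoidAlgebra.induction_linear with
  | zero => simp [mapDomain_zero]
  | add x y hx hy => rw [map_add, LinearMap.add_apply, hx, hy, mapDomain_add]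
  | single σ c => simp [permAction_single, mapDomain_single, FreeMonoid.ofList_map]

lemma injective_permAction_apply_single_ofList {l : List X} (hl : ∀ x, x ∈ l) :
    Function.Injective fun x : MonoidAlgebra R (Equiv.Perm X) =>
      permAction R x (single (FreeMonoid.ofList l) 1) := by
  simp only [permAction_apply_single_ofList]
  refine mapDomain_injective fun σ τ h => Equiv.ext fun x => ?_
  exact (List.map_inj_left.mp (FreeMonoid.ofList.injective h)) x (hl x)

end FreeMonoidAlgebra

open FreeMonoidAlgebra

section DynkinIdempotent

def initialSegment (n m : ℕ) : List (Fin n) := (List.finRange n).take m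

def partialDynkin (R : Type) [CommRing R] (n m : ℕ) : MonoidAlgebra R (Equiv.Perm (Fin n)) :=
  ((List.range m).map fun j => 1 - of R _ (cycleDown n (j + 1))).prod

variable (R : Type) [CommRing R] {n}

lemma initialSegment_succ {m : ℕ} (hm : m < n) :
    initialSegment n (m + 1) = initialSegment n m ++ [⟨m, hm⟩] := by
  simp [initialSegment, List.take_add_one, hm]

lemma initialSegment_self : initialSegment n n = List.finRange n :=
  List.take_of_length_le (by simp)

lemma cycleDown_of_lt {j : ℕ} (hj : j < n) : cycleDown n j = (Fin.cycleRange ⟨j, hj⟩)⁻¹ :=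
  dif_pos hj

lemma cycleDown_apply_of_lt {j : ℕ} {i : Fin n} (h : j < i) : cycleDown n j i = i := by
  unfold cycleDown
  split_ifs with hj
  · rw [Equiv.Perm.inv_eq_iff_eq, Fin.cycleRange_of_gt (Fin.mk_lt_of_lt_val h)]
  · rfl

lemma map_cycleDown_initialSegment {j : ℕ} (hj : j < n) :
    (initialSegment n (j + 1)).map (cycleDown n j) = ⟨j, hj⟩ :: initialSegment n j := by
  apply List.ext_getElem (by simp [initialSegment]; omega)
  rintro (_ | i) h₁ h₂
  · simp only [List.getElem_map, initialSegment, List.getElem_take, List.getElem_finRange,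
      cycleDown_of_lt hj, Equiv.Perm.inv_eq_iff_eq, List.getElem_cons_zero]
    ext
    simp [Fin.coe_cycleRange_of_le]
  · simp only [List.getElem_map, initialSegment, List.getElem_take, List.getElem_finRange,
      cycleDown_of_lt hj, Equiv.Perm.inv_eq_iff_eq, List.getElem_cons_succ]
    have hij : i < j := by simpa [initialSegment, hj.le] using h₂
    ext
    simp [Fin.coe_cycleRange_of_lt (Fin.mk_lt_mk.mpr hij)]

lemma partialDynkin_succ (m : ℕ) :
    partialDynkin R n (m + 1) = partialDynkin R n m * (1 - of R _ (cycleDown n (m + 1))) := by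
  simp [partialDynkin, List.range_succ]

lemma dynkin_eq_partialDynkin : dynkin R n = partialDynkin R n (n - 1) := rfl

lemma partialDynkin_mem_adjoin {m : ℕ} {i : Fin n} (h : m < i) :
    partialDynkin R n m ∈ Algebra.adjoin R (of R _ '' {σ | σ i = i}) := by
  refine Subalgebra.list_prod_mem _ fun x hx => ?_
  obtain ⟨j, hj, rfl⟩ := List.mem_map.mp hx
  exact sub_mem (one_mem _) (Algebra.subset_adjoin
    ⟨_, cycleDown_apply_of_lt (by simp at hj; omega), rfl⟩)

lemma permAction_partialDynkin {m : ℕ} (hm : m < n) :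
    permAction R (partialDynkin R n m) (single (FreeMonoid.ofList (initialSegment n (m + 1))) 1) =
      leftNormedBracket R (initialSegment n (m + 1)) := by
  induction m with
  | zero =>
    simp only [initialSegment_succ hm]
    simp [partialDynkin, initialSegment, gen]
  | succ m ih =>
    have hseg := initialSegment_succ hm
    have hne : initialSegment n (m + 1) ≠ [] := by
      rw [initialSegment_succ (by omega : m < n)]
      simp
    have hE : single (FreeMonoid.ofList (initialSegment n (m + 2))) (1 : R) -
        rename R (cycleDown n (m + 1)) (single (FreeMonoid.ofList (initialSegment n (m + 2))) 1) =
          ⁅single (FreeMonoid.ofList (initialSegment n (m + 1))) (1 : R), gen R ⟨m + 1, hm⟩⁆ := by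
      rw [rename_single, ← FreeMonoid.ofList_map, map_cycleDown_initialSegment hm, hseg]
      simp [Ring.lie_def, gen, single_mul_single, FreeMonoid.ofList_append, FreeMonoid.ofList_cons]
    rw [partialDynkin_succ, map_mul, Module.End.mul_apply, map_sub, map_one, LinearMap.sub_apply,
      permAction_of, Module.End.one_apply, hE,
      permAction_lie_gen (partialDynkin_mem_adjoin R (i := ⟨m + 1, hm⟩) (Nat.lt_succ_self m)),
      ih (by omega), hseg, leftNormedBracket_append_singleton hne]

theorem dynkin_mul_self (hn : n ≠ 0) : dynkin R n * dynkin R n = n • dynkin R n := by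
  set E : MonoidAlgebra R (FreeMonoid (Fin n)) := single (FreeMonoid.ofList (List.finRange n)) 1
  have hDE : dynkinMap R E = leftNormedBracket R (List.finRange n) := by
    simp [E, dynkinMap_single]
  have hθE : permAction R (dynkin R n) E = dynkinMap R E := by
    have h := permAction_partialDynkin R (Nat.sub_one_lt hn)
    rwa [← dynkin_eq_partialDynkin, Nat.sub_add_cancel (Nat.pos_of_ne_zero hn),
      initialSegment_self, ← hDE] at h
  apply injective_permAction_apply_single_ofList (R := R) List.mem_finRange
  simp only [map_mul, Module.End.mul_apply, map_nsmul, LinearMap.smul_apply]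
  rw [hθE, permAction_dynkinMap, hθE, hDE, dynkinMap_leftNormedBracket, List.length_finRange]

end DynkinIdempotent

section Evaluation

variable {k n V}

lemma permTpow_mul (σ τ : Equiv.Perm (Fin n)) :
    permTpow k n V (σ * τ) = permTpow k n V σ ∘ₗ permTpow k n V τ := by
  rw [permTpow, permTpow, permTpow, ← LinearEquiv.coe_trans, PiTensorProduct.reindex_trans]
  rfl

lemma permTpow_one : permTpow k n V 1 = LinearMap.id := by
  rw [permTpow, Equiv.Perm.one_def, PiTensorProduct.reindex_refl]
  rfl

lemma actS_single (σ : Equiv.Perm (Fin n)) (c : k) :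
    actS k n V (single σ c) = c • permTpow k n V σ⁻¹ := by
  simp [actS]

lemma actS_mul (x y : MonoidAlgebra k (Equiv.Perm (Fin n))) :
    actS k n V (x * y) = actS k n V y ∘ₗ actS k n V x := by
  induction x using MonoidAlgebra.induction_linear with
  | zero => simp
  | add x x' hx hx' => simp only [add_mul, map_add, hx, hx', LinearMap.comp_add]
  | single σ c =>
    induction y using MonoidAlgebra.induction_linear with
    | zero => simp
    | add y y' hy hy' => simp only [mul_add, map_add, hy, hy', LinearMap.add_comp]
    | single τ d =>
      rw [single_mul_single, actS_single, actS_single, actS_single, mul_inv_rev, permTpow_mul,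
        LinearMap.smul_comp, LinearMap.comp_smul, smul_smul, mul_comm]

variable (k n V) in
def actEval : Tpow k n V ⊗[k] MonoidAlgebra k (Equiv.Perm (Fin n)) →ₗ[k] Tpow k n V :=
  TensorProduct.lift (actS k n V).flip

@[simp]
lemma actEval_tmul (v : Tpow k n V) (x : MonoidAlgebra k (Equiv.Perm (Fin n))) :
    actEval k n V (v ⊗ₜ x) = actS k n V x v := rfl

lemma evalLie_eq_actS_dynkin (a : Tpow k n V ⊗[k] MonoidAlgebra k (Equiv.Perm (Fin n))) :
    evalLie k n V a = actS k n V (dynkin k n) (actEval k n V a) := by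
  induction a using TensorProduct.induction_on with
  | zero => simp
  | add x y hx hy => rw [map_add, map_add, map_add, hx, hy]
  | tmul v x =>
    change actS k n V (x * dynkin k n) v = _
    rw [actS_mul]
    rfl

lemma diagActT_tmul_one (σ : Equiv.Perm (Fin n)) (v : Tpow k n V) :
    diagActT k n V σ (v ⊗ₜ 1) = permTpow k n V σ v ⊗ₜ of k _ σ := by
  simp [diagActT]

lemma sub_actEval_tmul_one_mem_coinvRel (m : Tpow k n V ⊗[k] MonoidAlgebra k (Equiv.Perm (Fin n))) :
    m - actEval k n V m ⊗ₜ 1 ∈ coinvRel k (Equiv.Perm (Fin n)) _ (diagActT k n V) := by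
  induction m using TensorProduct.induction_on with
  | zero => simp [zero_mem]
  | add x y hx hy => simpa [TensorProduct.add_tmul, add_sub_add_comm] using add_mem hx hy
  | tmul v x =>
    induction x using MonoidAlgebra.induction_linear with
    | zero => simp [zero_mem]
    | add x y hx hy =>
      simpa [TensorProduct.tmul_add, TensorProduct.add_tmul, add_sub_add_comm] using add_mem hx hy
    | single σ c =>
      have hσ : diagActT k n V σ (permTpow k n V σ⁻¹ v ⊗ₜ 1) = v ⊗ₜ single σ 1 := by
        rw [diagActT_tmul_one, ← LinearMap.comp_apply, ← permTpow_mul, mul_inv_cancel,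
          permTpow_one, LinearMap.id_apply, of_apply]
      have hsplit : v ⊗ₜ single σ c - actEval k n V (v ⊗ₜ single σ c) ⊗ₜ 1 =
          c • (diagActT k n V σ (permTpow k n V σ⁻¹ v ⊗ₜ 1) - permTpow k n V σ⁻¹ v ⊗ₜ 1) := by
        rw [hσ, actEval_tmul, actS_single, smul_sub, ← TensorProduct.tmul_smul, smul_single,
          smul_eq_mul, mul_one, LinearMap.smul_apply, TensorProduct.smul_tmul']
      rw [hsplit]
      exact Submodule.smul_mem _ _ (Submodule.subset_span ⟨σ, _, rfl⟩)

lemma tmul_mem_annPart (v : Tpow k n V) {x : MonoidAlgebra k (Equiv.Perm (Fin n))}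
    (hx : x ∈ annL k n) : v ⊗ₜ x ∈ annPart k n V :=
  ⟨v ⊗ₜ ⟨x, hx⟩, rfl⟩

end Evaluation

theorem folie_to_tensor_injective (p : ℕ) [CharP k p]
    (hpn : ¬ p ∣ n)
    (a : Tpow k n V ⊗[k] MonoidAlgebra k (Equiv.Perm (Fin n)))
    (ha : evalLie k n V a = 0) : a ∈ folieRel k n V := by
  have hn : (n : k) ≠ 0 := fun h => hpn ((CharP.cast_eq_zero_iff k p n).mp h)
  set θ := dynkin k n
  set w := actEval k n V a
  have hw : actS k n V θ w = 0 := (evalLie_eq_actS_dynkin a).symm.trans ha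
  have hθ : θ * θ = (n : k) • θ := by
    rw [dynkin_mul_self k (by rintro rfl; exact hn Nat.cast_zero), Nat.cast_smul_eq_nsmul]
  have hann : 1 - (n : k)⁻¹ • θ ∈ annL k n := by
    change (1 - (n : k)⁻¹ • θ) * θ = 0
    rw [sub_mul, one_mul, smul_mul_assoc, hθ, smul_smul, inv_mul_cancel₀ hn, one_smul, sub_self]
  have hwθ : w ⊗ₜ θ ∈ coinvRel k (Equiv.Perm (Fin n)) _ (diagActT k n V) := by
    simpa [hw] using sub_actEval_tmul_one_mem_coinvRel (w ⊗ₜ[k] θ)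
  have hsplit : a = (a - w ⊗ₜ 1) + w ⊗ₜ (1 - (n : k)⁻¹ • θ) + (n : k)⁻¹ • (w ⊗ₜ θ) := by
    rw [TensorProduct.tmul_sub, TensorProduct.tmul_smul]
    abel
  rw [hsplit]
  refine add_mem (add_mem ?_ ?_) (Submodule.smul_mem _ _ (Submodule.mem_sup_right hwθ))
  · exact Submodule.mem_sup_right (sub_actEval_tmul_one_mem_coinvRel a)
  · exact Submodule.mem_sup_left (tmul_mem_annPart w hann)
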